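/- With the notation of the band-matrix setup: for every n ∈ ℕ, the function P e_n is square-integrable with respect to the measure (x² + 1)^{k₀◊} dx (so b_m^n is well defined), and b_m^n = 0 whenever |m − n| > 2M + k₀ − k₀◊. -/

import Mathlib

open MeasureTheory

/-- The wavepacket basis function `ψ_{k,n}(x) = (x+i)^{-(k+1)} ((x-i)/(x+i))^n`. -/
noncomputable def psi (k n : ℤ) : ℝ → ℂ := fun x =>
  ((x : ℂ) + Complex.I) ^ (-(k + 1)) * (((x : ℂ) - Complex.I) / ((x : ℂ) + Complex.I)) ^ n

/-- The sorting index `ñ(k, n) = ⌊-(k+1)/2⌋ + (-1)^{n+k+1} ⌊(n+1)/2⌋`. -/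
noncomputable def ntilde (k : ℤ) (n : ℕ) : ℤ :=
  ⌊(-(k : ℚ) - 1) / 2⌋ + (if Even ((n : ℤ) + k + 1) then 1 else -1) * ⌊((n : ℚ) + 1) / 2⌋

/-- The sorted basis function `e^{(k)}_n = π^{-1/2} ψ_{k, ñ(k,n)}`. -/
noncomputable def ebasis (k : ℤ) (n : ℕ) : ℝ → ℂ := fun x =>
  (((Real.sqrt Real.pi)⁻¹ : ℝ) : ℂ) * psi k (ntilde k n) x

/-- `s₀ = max_{0 ≤ m ≤ M} (deg p_m - m)`. -/
noncomputable def s0 (M : ℕ) (p : ℕ → Polynomial ℂ) : ℤ :=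
  Finset.sup' (Finset.range (M + 1)) Finset.nonempty_range_add_one
    fun m => ((p m).natDegree : ℤ) - (m : ℤ)

/-- The differential operator `(P f)(x) = Σ_{m=0}^{M} p_m(x) f^{(m)}(x)`. -/
noncomputable def Pop (M : ℕ) (p : ℕ → Polynomial ℂ) (f : ℝ → ℂ) : ℝ → ℂ := fun x =>
  ∑ m ∈ Finset.range (M + 1), (p m).eval (x : ℂ) * deriv^[m] f x

/-- The band matrix `b_m^n = ∫ (P e_n)(x) conj(e◊_m(x)) (x²+1)^{k₀◊} dx`, where
`e_n = e^{(k₀)}_n` and `e◊_m = e^{(k₀◊)}_m`. -/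
noncomputable def bmat (M : ℕ) (p : ℕ → Polynomial ℂ) (k₀ kd : ℤ) (m n : ℕ) : ℂ :=
  ∫ x : ℝ, Pop M p (ebasis k₀ n) x * (starRingEnd ℂ) (ebasis kd m x) *
    ((((x ^ 2 + 1) ^ kd : ℝ)) : ℂ)

/-- The weighted measure `(x² + 1)^k dx` on `ℝ`. -/
noncomputable def wMeasure (k : ℤ) : Measure ℝ :=
  volume.withDensity fun x => ENNReal.ofReal ((x ^ 2 + 1) ^ k)

/-!
Write `ψ_{k,a} = (x - i)^a (x + i)^{-(k+1)-a}`. Everything in sight lies in the span of the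
monomials `(x - i)^u (x + i)^v` with `u ≥ u₀`, `v ≥ v₀`, `u + v ≤ s`: this span is stable under
differentiation (lowering `u₀`, `v₀`, `s` by one), multiplication by polynomials and complex
conjugation, and products add the bounds. For `s ≤ -2` its elements are integrable, and when also
`u₀ ≥ 0` or `v₀ ≥ 0` their integral vanishes (there is no pole in one of the half-planes): by
`x - i = (x + i) - 2i` this reduces to `∫ (x + i)^w dx = 0` for `w ≤ -2`, and the case `v₀ ≥ 0`
follows by conjugation. Square-integrability of `P e_n` is then integrability of
`|P e_n|² (x² + 1)^{k₀◊}`, and the band structure comes from `2 ñ(k, n) + k + 1 ∈ {n, -n-1}`, which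
turns `|m - n| > 2M + k₀ - k₀◊` into `u₀ ≥ 0` or `v₀ ≥ 0` for the integrand of `b_m^n`.
-/

open Complex ComplexConjugate Filter Topology

lemma ofReal_add_I_ne_zero (x : ℝ) : (x : ℂ) + I ≠ 0 := fun h => by
  simpa using congrArg im h

lemma ofReal_sub_I_ne_zero (x : ℝ) : (x : ℂ) - I ≠ 0 := fun h => by
  simpa using congrArg im h

lemma norm_ofReal_add_I (x : ℝ) : ‖(x : ℂ) + I‖ = √(x ^ 2 + 1) := by
  simpa using norm_add_mul_I x 1

lemma norm_ofReal_sub_I (x : ℝ) : ‖(x : ℂ) - I‖ = √(x ^ 2 + 1) := by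
  simpa [sub_eq_add_neg] using norm_add_mul_I x (-1)

lemma one_le_sqrt_sq_add_one (x : ℝ) : 1 ≤ √(x ^ 2 + 1) :=
  Real.one_le_sqrt.mpr (by nlinarith)

lemma tendsto_sqrt_sq_add_one_cocompact :
    Tendsto (fun x : ℝ => √(x ^ 2 + 1)) (cocompact ℝ) atTop :=
  tendsto_atTop_mono (fun x => Real.abs_le_sqrt (by linarith)) tendsto_norm_cocompact_atTop

noncomputable def laurentMonomial (u v : ℤ) (x : ℝ) : ℂ :=
  ((x : ℂ) - I) ^ u * ((x : ℂ) + I) ^ v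

lemma laurentMonomial_mul (u v u' v' : ℤ) :
    laurentMonomial u v * laurentMonomial u' v' = laurentMonomial (u + u') (v + v') := by
  ext x
  simp only [Pi.mul_apply, laurentMonomial, zpow_add₀ (ofReal_sub_I_ne_zero x),
    zpow_add₀ (ofReal_add_I_ne_zero x)]
  ring

lemma conj_laurentMonomial (u v : ℤ) (x : ℝ) :
    conj (laurentMonomial u v x) = laurentMonomial v u x := by
  simp only [laurentMonomial, map_mul, map_zpow₀, map_sub, map_add, conj_ofReal, conj_I,
    sub_neg_eq_add]
  exact mul_comm _ _

lemma norm_laurentMonomial (u v : ℤ) (x : ℝ) :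
    ‖laurentMonomial u v x‖ = √(x ^ 2 + 1) ^ (u + v) := by
  rw [laurentMonomial, norm_mul, norm_zpow, norm_zpow, norm_ofReal_sub_I, norm_ofReal_add_I,
    zpow_add₀ (by positivity)]

lemma continuous_laurentMonomial (u v : ℤ) : Continuous (laurentMonomial u v) :=
  ((continuous_ofReal.sub continuous_const).zpow₀ u fun x => .inl (ofReal_sub_I_ne_zero x)).mul
    ((continuous_ofReal.add continuous_const).zpow₀ v fun x => .inl (ofReal_add_I_ne_zero x))

lemma hasDerivAt_laurentMonomial (u v : ℤ) (x : ℝ) :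
    HasDerivAt (laurentMonomial u v)
      (u * laurentMonomial (u - 1) v x + v * laurentMonomial u (v - 1) x) x := by
  have hsub : HasDerivAt (fun z : ℂ => (z - I) ^ u) (u * ((x : ℂ) - I) ^ (u - 1)) x := by
    simpa [Function.comp_def] using
      (hasDerivAt_zpow u _ (.inl (ofReal_sub_I_ne_zero x))).comp (x : ℂ)
        ((hasDerivAt_id (x : ℂ)).sub_const I)
  have hadd : HasDerivAt (fun z : ℂ => (z + I) ^ v) (v * ((x : ℂ) + I) ^ (v - 1)) x := by
    simpa [Function.comp_def] using
      (hasDerivAt_zpow v _ (.inl (ofReal_add_I_ne_zero x))).comp (x : ℂ)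
        ((hasDerivAt_id (x : ℂ)).add_const I)
  convert (hsub.mul hadd).comp_ofReal using 1
  · rfl
  simp only [laurentMonomial]
  ring

lemma integrable_laurentMonomial {u v : ℤ} (h : u + v ≤ -2) :
    Integrable (laurentMonomial u v) := by
  refine integrable_inv_one_add_sq.mono' (continuous_laurentMonomial u v).aestronglyMeasurable
    (.of_forall fun x => ?_)
  calc ‖laurentMonomial u v x‖ = √(x ^ 2 + 1) ^ (u + v) := norm_laurentMonomial u v x
    _ ≤ √(x ^ 2 + 1) ^ (-2 : ℤ) := zpow_le_zpow_right₀ (one_le_sqrt_sq_add_one x) h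
    _ = (1 + x ^ 2)⁻¹ := by
      rw [zpow_neg, zpow_two, Real.mul_self_sqrt (by positivity), add_comm]

lemma tendsto_laurentMonomial_cocompact {u v : ℤ} (h : u + v < 0) :
    Tendsto (laurentMonomial u v) (cocompact ℝ) (𝓝 0) := by
  rw [tendsto_zero_iff_norm_tendsto_zero]
  simp only [norm_laurentMonomial]
  exact (tendsto_zpow_atTop_zero h).comp tendsto_sqrt_sq_add_one_cocompact

lemma integral_laurentMonomial_zero_left {w : ℤ} (hw : w ≤ -2) :
    ∫ x, laurentMonomial 0 w x = 0 := by
  have hw' : ((w + 1 : ℤ) : ℂ) ≠ 0 := Int.cast_ne_zero.mpr (by omega)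
  have hderiv : ∀ x, HasDerivAt (fun y => ((w + 1 : ℤ) : ℂ)⁻¹ * laurentMonomial 0 (w + 1) y)
      (laurentMonomial 0 w x) x := fun x => by
    refine ((hasDerivAt_laurentMonomial 0 (w + 1) x).const_mul _).congr_deriv ?_
    rw [add_sub_cancel_right, Int.cast_zero, zero_mul, zero_add, inv_mul_cancel_left₀ hw']
  have hlim := (tendsto_laurentMonomial_cocompact (u := 0) (v := w + 1) (by omega)).const_mul
    ((w + 1 : ℤ) : ℂ)⁻¹
  rw [mul_zero] at hlim
  simpa using integral_of_hasDerivAt_of_tendsto hderiv (integrable_laurentMonomial (by omega))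
    (hlim.mono_left atBot_le_cocompact) (hlim.mono_left atTop_le_cocompact)

lemma laurentMonomial_add_one_left (u v : ℤ) (x : ℝ) :
    laurentMonomial (u + 1) v x = laurentMonomial u (v + 1) x - 2 * I * laurentMonomial u v x := by
  simp only [laurentMonomial, zpow_add_one₀ (ofReal_sub_I_ne_zero x),
    zpow_add_one₀ (ofReal_add_I_ne_zero x)]
  ring

lemma integral_laurentMonomial_natCast_left (u : ℕ) {v : ℤ} (h : u + v ≤ -2) :
    ∫ x, laurentMonomial u v x = 0 := by
  induction u generalizing v with
  | zero => exact integral_laurentMonomial_zero_left (by simpa using h)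
  | succ u ih =>
    push_cast at h ⊢
    simp_rw [laurentMonomial_add_one_left]
    rw [integral_sub (integrable_laurentMonomial (by omega))
      ((integrable_laurentMonomial (by omega)).const_mul _), integral_const_mul, ih (by omega),
      ih (by omega), mul_zero, sub_zero]

lemma integral_laurentMonomial_eq_zero {u v : ℤ} (h : u + v ≤ -2) (huv : 0 ≤ u ∨ 0 ≤ v) :
    ∫ x, laurentMonomial u v x = 0 := by
  rcases huv with hu | hv
  · lift u to ℕ using hu
    exact integral_laurentMonomial_natCast_left u h
  · lift v to ℕ using hv
    calc ∫ x, laurentMonomial u v x = ∫ x, conj (laurentMonomial v u x) := by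
          simp_rw [conj_laurentMonomial]
      _ = 0 := by rw [integral_conj, integral_laurentMonomial_natCast_left v (by omega), map_zero]

noncomputable def laurentSpan (u₀ v₀ s : ℤ) : Submodule ℂ (ℝ → ℂ) :=
  Submodule.span ℂ {f | ∃ u v, u₀ ≤ u ∧ v₀ ≤ v ∧ u + v ≤ s ∧ laurentMonomial u v = f}

section laurentSpan

variable {u₀ v₀ s u₁ v₁ t : ℤ} {f g : ℝ → ℂ}

lemma laurentMonomial_mem_laurentSpan {u v : ℤ} (hu : u₀ ≤ u) (hv : v₀ ≤ v) (hs : u + v ≤ s) :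
    laurentMonomial u v ∈ laurentSpan u₀ v₀ s :=
  Submodule.subset_span ⟨u, v, hu, hv, hs, rfl⟩

lemma laurentSpan_mono (hu : u₁ ≤ u₀) (hv : v₁ ≤ v₀) (hs : s ≤ t) :
    laurentSpan u₀ v₀ s ≤ laurentSpan u₁ v₁ t := by
  refine Submodule.span_mono ?_
  rintro _ ⟨u, v, hu', hv', hs', rfl⟩
  exact ⟨u, v, hu.trans hu', hv.trans hv', hs'.trans hs, rfl⟩

lemma mul_mem_laurentSpan (hf : f ∈ laurentSpan u₀ v₀ s) (hg : g ∈ laurentSpan u₁ v₁ t) :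
    f * g ∈ laurentSpan (u₀ + u₁) (v₀ + v₁) (s + t) := by
  have hle : laurentSpan u₀ v₀ s * laurentSpan u₁ v₁ t ≤
      laurentSpan (u₀ + u₁) (v₀ + v₁) (s + t) := by
    rw [laurentSpan, laurentSpan, Submodule.span_mul_span]
    refine Submodule.span_mono ?_
    rintro _ ⟨_, ⟨u, v, hu, hv, hs, rfl⟩, _, ⟨u', v', hu', hv', hs', rfl⟩, rfl⟩
    exact ⟨u + u', v + v', by omega, by omega, by omega, (laurentMonomial_mul u v u' v').symm⟩
  exact hle (Submodule.mul_mem_mul hf hg)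

lemma star_mem_laurentSpan (hf : f ∈ laurentSpan u₀ v₀ s) : star f ∈ laurentSpan v₀ u₀ s := by
  induction hf using Submodule.span_induction with
  | mem _ h =>
    obtain ⟨u, v, hu, hv, hs, rfl⟩ := h
    convert laurentMonomial_mem_laurentSpan hv hu (by omega : v + u ≤ s) using 1
    ext x
    exact conj_laurentMonomial u v x
  | zero => simp
  | add _ _ _ _ hf hg => simpa only [star_add] using add_mem hf hg
  | smul c _ _ hf => simpa only [star_smul] using Submodule.smul_mem _ _ hf

lemma continuous_of_mem_laurentSpan (hf : f ∈ laurentSpan u₀ v₀ s) : Continuous f := by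
  induction hf using Submodule.span_induction with
  | mem _ h =>
    obtain ⟨u, v, -, -, -, rfl⟩ := h
    exact continuous_laurentMonomial u v
  | zero => exact continuous_const
  | add _ _ _ _ hf hg => exact hf.add hg
  | smul c _ _ hf => exact hf.const_smul c

lemma integrable_of_mem_laurentSpan (hf : f ∈ laurentSpan u₀ v₀ s) (hs : s ≤ -2) :
    Integrable f := by
  induction hf using Submodule.span_induction with
  | mem _ h =>
    obtain ⟨u, v, -, -, huv, rfl⟩ := h
    exact integrable_laurentMonomial (huv.trans hs)
  | zero => exact integrable_zero _ _ _
  | add _ _ _ _ hf hg => exact hf.add hg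
  | smul c _ _ hf => exact hf.smul c

lemma integral_eq_zero_of_mem_laurentSpan (hf : f ∈ laurentSpan u₀ v₀ s) (hs : s ≤ -2)
    (h : 0 ≤ u₀ ∨ 0 ≤ v₀) : ∫ x, f x = 0 := by
  induction hf using Submodule.span_induction with
  | mem _ h' =>
    obtain ⟨u, v, hu, hv, huv, rfl⟩ := h'
    exact integral_laurentMonomial_eq_zero (huv.trans hs) (by omega)
  | zero => exact integral_zero _ _
  | add _ _ hf hg ihf ihg =>
    rw [integral_add' (integrable_of_mem_laurentSpan hf hs)
      (integrable_of_mem_laurentSpan hg hs), ihf, ihg, add_zero]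
  | smul c _ _ ih => simp only [Pi.smul_apply, integral_smul, ih, smul_zero]

lemma exists_hasDerivAt_of_mem_laurentSpan (hf : f ∈ laurentSpan u₀ v₀ s) :
    ∃ f', (∀ x, HasDerivAt f (f' x) x) ∧ f' ∈ laurentSpan (u₀ - 1) (v₀ - 1) (s - 1) := by
  induction hf using Submodule.span_induction with
  | mem _ h =>
    obtain ⟨u, v, hu, hv, hs, rfl⟩ := h
    refine ⟨(u : ℂ) • laurentMonomial (u - 1) v + (v : ℂ) • laurentMonomial u (v - 1),
      hasDerivAt_laurentMonomial u v, add_mem (Submodule.smul_mem _ _ ?_)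
      (Submodule.smul_mem _ _ ?_)⟩ <;>
    exact laurentMonomial_mem_laurentSpan (by omega) (by omega) (by omega)
  | zero => exact ⟨0, fun x => hasDerivAt_const x 0, zero_mem _⟩
  | add _ _ _ _ hf hg =>
    obtain ⟨f', hf, hf'⟩ := hf
    obtain ⟨g', hg, hg'⟩ := hg
    exact ⟨f' + g', fun x => (hf x).add (hg x), add_mem hf' hg'⟩
  | smul c _ _ hf =>
    obtain ⟨f', hf, hf'⟩ := hf
    exact ⟨c • f', fun x => (hf x).const_smul c, Submodule.smul_mem _ _ hf'⟩

lemma iterate_deriv_mem_laurentSpan (hf : f ∈ laurentSpan u₀ v₀ s) (m : ℕ) :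
    deriv^[m] f ∈ laurentSpan (u₀ - m) (v₀ - m) (s - m) := by
  induction m with
  | zero => simpa using hf
  | succ m ih =>
    obtain ⟨f', hf', hmem⟩ := exists_hasDerivAt_of_mem_laurentSpan ih
    rw [Function.iterate_succ_apply', funext fun x => (hf' x).deriv]
    exact laurentSpan_mono (by omega) (by omega) (by omega) hmem

end laurentSpan

lemma ofReal_mem_laurentSpan : (fun x : ℝ => (x : ℂ)) ∈ laurentSpan 0 0 1 := by
  have h : (fun x : ℝ => (x : ℂ)) = (2⁻¹ : ℂ) • (laurentMonomial 1 0 + laurentMonomial 0 1) := by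
    ext x
    simp only [laurentMonomial, Pi.smul_apply, Pi.add_apply, smul_eq_mul, zpow_one, zpow_zero]
    ring
  rw [h]
  exact Submodule.smul_mem _ _ (add_mem (laurentMonomial_mem_laurentSpan (by norm_num) le_rfl
    (by norm_num)) (laurentMonomial_mem_laurentSpan le_rfl (by norm_num) (by norm_num)))

lemma ofReal_pow_mem_laurentSpan (i : ℕ) :
    (fun x : ℝ => (x : ℂ) ^ i) ∈ laurentSpan 0 0 i := by
  induction i with
  | zero =>
    rw [show (fun x : ℝ => (x : ℂ) ^ 0) = laurentMonomial 0 0 from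
      funext fun x => by simp [laurentMonomial]]
    exact laurentMonomial_mem_laurentSpan le_rfl le_rfl le_rfl
  | succ i ih =>
    rw [show (fun x : ℝ => (x : ℂ) ^ (i + 1)) =
      (fun x : ℝ => (x : ℂ) ^ i) * fun x : ℝ => (x : ℂ) from funext fun x => pow_succ _ _]
    exact_mod_cast mul_mem_laurentSpan ih ofReal_mem_laurentSpan

lemma polynomial_eval_mem_laurentSpan (q : Polynomial ℂ) :
    (fun x : ℝ => q.eval (x : ℂ)) ∈ laurentSpan 0 0 q.natDegree := by
  have h : (fun x : ℝ => q.eval (x : ℂ)) =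
      ∑ i ∈ Finset.range (q.natDegree + 1), q.coeff i • fun x : ℝ => (x : ℂ) ^ i := by
    ext x
    simp [Polynomial.eval_eq_sum_range]
  rw [h]
  refine Submodule.sum_mem _ fun i hi => Submodule.smul_mem _ _ ?_
  exact laurentSpan_mono le_rfl le_rfl (by simp at hi; omega) (ofReal_pow_mem_laurentSpan i)

lemma Pop_mem_laurentSpan (M : ℕ) (p : ℕ → Polynomial ℂ) {f : ℝ → ℂ} {u₀ v₀ s : ℤ}
    (hf : f ∈ laurentSpan u₀ v₀ s) : Pop M p f ∈ laurentSpan (u₀ - M) (v₀ - M) (s + s0 M p) := by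
  have h : Pop M p f = ∑ m ∈ Finset.range (M + 1),
      (fun x : ℝ => (p m).eval (x : ℂ)) * deriv^[m] f := by
    ext x
    simp [Pop]
  rw [h]
  refine Submodule.sum_mem _ fun m hm => ?_
  have hdeg : ((p m).natDegree : ℤ) - m ≤ s0 M p :=
    Finset.le_sup' (fun m => ((p m).natDegree : ℤ) - m) hm
  have hmM : m ≤ M := Finset.mem_range_succ_iff.mp hm
  exact laurentSpan_mono (by omega) (by omega) (by omega)
    (mul_mem_laurentSpan (polynomial_eval_mem_laurentSpan (p m))
      (iterate_deriv_mem_laurentSpan hf m))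

lemma psi_eq_laurentMonomial (k a : ℤ) : psi k a = laurentMonomial a (-(k + 1) - a) := by
  ext x
  rw [psi, laurentMonomial, div_zpow, zpow_sub₀ (ofReal_add_I_ne_zero x)]
  ring

lemma ebasis_mem_laurentSpan (k : ℤ) (n : ℕ) :
    ebasis k n ∈ laurentSpan (ntilde k n) (-(k + 1) - ntilde k n) (-(k + 1)) := by
  have h : ebasis k n = (((√Real.pi)⁻¹ : ℝ) : ℂ) • psi k (ntilde k n) := rfl
  rw [h, psi_eq_laurentMonomial]
  exact Submodule.smul_mem _ _ (laurentMonomial_mem_laurentSpan le_rfl le_rfl (by omega))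

lemma ofReal_sq_add_one_zpow (k : ℤ) :
    (fun x : ℝ => (((x ^ 2 + 1) ^ k : ℝ) : ℂ)) = laurentMonomial k k := by
  ext x
  have h : ((x ^ 2 + 1 : ℝ) : ℂ) = ((x : ℂ) - I) * ((x : ℂ) + I) := by
    push_cast
    linear_combination I_sq
  rw [ofReal_zpow, h, mul_zpow, laurentMonomial]

lemma memLp_two_wMeasure_of_mem_laurentSpan {f : ℝ → ℂ} {u₀ v₀ s k : ℤ}
    (hf : f ∈ laurentSpan u₀ v₀ s) (hs : s + k ≤ -1) : MemLp f 2 (wMeasure k) := by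
  have hweight : Continuous fun x : ℝ => (x ^ 2 + 1) ^ k :=
    ((continuous_pow 2).add continuous_const).zpow₀ k fun x => .inl (by positivity : x ^ 2 + 1 ≠ 0)
  rw [memLp_two_iff_integrable_sq_norm (continuous_of_mem_laurentSpan hf).aestronglyMeasurable,
    wMeasure, integrable_withDensity_iff hweight.measurable.ennreal_ofReal
      (.of_forall fun _ => ENNReal.ofReal_lt_top)]
  have hmem := mul_mem_laurentSpan (mul_mem_laurentSpan hf (star_mem_laurentSpan hf))
    (laurentMonomial_mem_laurentSpan (u₀ := k) (v₀ := k) (s := k + k) le_rfl le_rfl le_rfl)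
  refine (integrable_of_mem_laurentSpan hmem (by omega)).norm.congr (.of_forall fun x => ?_)
  have hpos : 0 ≤ (x ^ 2 + 1) ^ k := (zpow_pos (by positivity) k).le
  rw [← ofReal_sq_add_one_zpow]
  simp only [Pi.mul_apply, Pi.star_apply, norm_mul, norm_star, norm_real, Real.norm_of_nonneg hpos,
    ENNReal.toReal_ofReal hpos, ← sq]

lemma two_mul_ntilde_add (k : ℤ) (n : ℕ) :
    2 * ntilde k n + k + 1 = if Even ((n : ℤ) + k) then -((n : ℤ) + 1) else n := by
  have hk : ⌊(-(k : ℚ) - 1) / 2⌋ = (-k - 1) / 2 := by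
    exact_mod_cast Rat.floor_intCast_div_natCast (-k - 1) 2
  have hn : ⌊((n : ℚ) + 1) / 2⌋ = ((n : ℤ) + 1) / 2 := by
    simpa using Rat.floor_intCast_div_natCast ((n : ℤ) + 1) 2
  rw [ntilde, hk, hn]
  split_ifs <;> simp only [Int.even_iff] at * <;> omega

lemma ntilde_sub_ntilde_of_lt_abs (N k k' : ℤ) (m n : ℕ)
    (h : 2 * N + k - k' < |(m : ℤ) - n|) :
    N + 1 ≤ ntilde k n - ntilde k' m ∨ N + 1 + (k - k') ≤ ntilde k' m - ntilde k n := by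
  have hn := two_mul_ntilde_add k n
  have hm := two_mul_ntilde_add k' m
  rw [lt_abs] at h
  split_ifs at hn hm <;> simp only [Int.even_iff] at * <;> omega

theorem stmt10_general (M : ℕ) (p : ℕ → Polynomial ℂ)
    (k₀ : ℤ) (kd : ℤ) (hkd : kd ≤ k₀ - s0 M p) :
    (∀ n : ℕ, MemLp (Pop M p (ebasis k₀ n)) 2 (wMeasure kd)) ∧
    (∀ m n : ℕ, |(m : ℤ) - (n : ℤ)| > 2 * (M : ℤ) + k₀ - kd → bmat M p k₀ kd m n = 0) := by
  have hP n := Pop_mem_laurentSpan M p (ebasis_mem_laurentSpan k₀ n)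
  refine ⟨fun n => memLp_two_wMeasure_of_mem_laurentSpan (hP n) (by omega), fun m n hmn => ?_⟩
  have hintegrand := mul_mem_laurentSpan (mul_mem_laurentSpan (hP n)
    (star_mem_laurentSpan (ebasis_mem_laurentSpan kd m)))
    (laurentMonomial_mem_laurentSpan (u₀ := kd) (v₀ := kd) (s := kd + kd) le_rfl le_rfl le_rfl)
  rw [← ofReal_sq_add_one_zpow] at hintegrand
  have hband := ntilde_sub_ntilde_of_lt_abs M k₀ kd m n hmn
  exact integral_eq_zero_of_mem_laurentSpan hintegrand (by omega) (by omega)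

/-- In the band-matrix setup (polynomial coefficients `p_0, …, p_M`
with `p_M ≠ 0`, integer `k₀ ≥ 0` and `k₀◊ ≤ k₀ - s₀`): for every `n`, `P e_n` is
square-integrable with respect to the measure `(x² + 1)^{k₀◊} dx` (so `b_m^n` is well
defined), and `b_m^n = 0` whenever `|m - n| > 2M + k₀ - k₀◊`. -/
theorem stmt10 (M : ℕ) (hM : 1 ≤ M) (p : ℕ → Polynomial ℂ) (hpM : p M ≠ 0)
    (k₀ : ℤ) (hk₀ : 0 ≤ k₀) (kd : ℤ) (hkd : kd ≤ k₀ - s0 M p) :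
    (∀ n : ℕ, MemLp (Pop M p (ebasis k₀ n)) 2 (wMeasure kd)) ∧
    (∀ m n : ℕ, |(m : ℤ) - (n : ℤ)| > 2 * (M : ℤ) + k₀ - kd → bmat M p k₀ kd m n = 0) :=
  stmt10_general M p k₀ kd hkd
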